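/- Let a two-player zero-sum POSG with finite horizon H be given, let 0 ≤ τ ≤ H−1 and let o_τ be an occupancy state. Then the local game Q*_τ(o_τ, ·, ·) admits at least one Nash equilibrium, i.e., a decision rule profile (β¹*_τ, β²*_τ) such that Q*_τ(o_τ, β¹_τ, β²*_τ) ≤ Q*_τ(o_τ, β¹*_τ, β²*_τ) ≤ Q*_τ(o_τ, β¹*_τ, β²_τ) for all β¹_τ, β²_τ; moreover every such Nash equilibrium has the same value, namely V*_τ(o_τ). -/

import Mathlib

open scoped BigOperators

/-- A two-player zero-sum partially observable stochastic game. -/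
structure POSG where
  S : Type
  A1 : Type
  A2 : Type
  Z1 : Type
  Z2 : Type
  [fintS : Fintype S]
  [fintA1 : Fintype A1]
  [fintA2 : Fintype A2]
  [fintZ1 : Fintype Z1]
  [fintZ2 : Fintype Z2]
  [neS : Nonempty S]
  [neA1 : Nonempty A1]
  [neA2 : Nonempty A2]
  [neZ1 : Nonempty Z1]
  [neZ2 : Nonempty Z2]
  P : S → A1 → A2 → S × Z1 × Z2 → ℝ
  P_nonneg : ∀ s a1 a2 x, 0 ≤ P s a1 a2 x
  P_sum_one : ∀ s a1 a2, ∑ x, P s a1 a2 x = 1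
  r : S → A1 → A2 → ℝ
  H : ℕ
  γ : ℝ
  γ_nonneg : 0 ≤ γ
  γ_lt_one : γ < 1

attribute [instance] POSG.fintS POSG.fintA1 POSG.fintA2 POSG.fintZ1 POSG.fintZ2
  POSG.neS POSG.neA1 POSG.neA2 POSG.neZ1 POSG.neZ2

/-- A length-`t` private history: a sequence of action-observation pairs. -/
abbrev Hist (A Z : Type) (t : ℕ) : Type := Fin t → A × Z

/-- A vector indexed by state–joint-history triples (the ambient space of occupancy states). -/
abbrev OccVec (G : POSG) (t : ℕ) : Type := G.S × Hist G.A1 G.Z1 t × Hist G.A2 G.Z2 t → ℝ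

/-- `o` is an occupancy state (a probability distribution). -/
def IsOcc (G : POSG) (t : ℕ) (o : OccVec G t) : Prop :=
  (∀ x, 0 ≤ o x) ∧ ∑ x, o x = 1

/-- A vector indexed by history–action pairs (the ambient space of behavioral decision rules). -/
abbrev DRVec (A Z : Type) (t : ℕ) : Type := Hist A Z t → A → ℝ

/-- `β` is a behavioral decision rule. -/
def IsDR {A Z : Type} [Fintype A] (t : ℕ) (β : DRVec A Z t) : Prop :=
  (∀ θ a, 0 ≤ β θ a) ∧ ∀ θ, ∑ a, β θ a = 1

/-- The occupancy-state transition `T(o, β¹, β²)`. -/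
noncomputable def Tr (G : POSG) (t : ℕ) (o : OccVec G t)
    (β1 : DRVec G.A1 G.Z1 t) (β2 : DRVec G.A2 G.Z2 t) : OccVec G (t + 1) :=
  fun x =>
    β1 (Fin.init x.2.1) (x.2.1 (Fin.last t)).1 * β2 (Fin.init x.2.2) (x.2.2 (Fin.last t)).1 *
      ∑ s, G.P s (x.2.1 (Fin.last t)).1 (x.2.2 (Fin.last t)).1
          (x.1, (x.2.1 (Fin.last t)).2, (x.2.2 (Fin.last t)).2) *
        o (s, Fin.init x.2.1, Fin.init x.2.2)

/-- The expected immediate reward `r(o, β¹, β²)`. -/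
noncomputable def Rew (G : POSG) (t : ℕ) (o : OccVec G t)
    (β1 : DRVec G.A1 G.Z1 t) (β2 : DRVec G.A2 G.Z2 t) : ℝ :=
  ∑ x : G.S × Hist G.A1 G.Z1 t × Hist G.A2 G.Z2 t, ∑ a1 : G.A1, ∑ a2 : G.A2,
    o x * β1 x.2.1 a1 * β2 x.2.2 a2 * G.r x.1 a1 a2

/-- A behavioral strategy: a decision rule for each time step. -/
abbrev Strat (A Z : Type) : Type := ∀ t : ℕ, DRVec A Z t

def IsStrat {A Z : Type} [Fintype A] (β : Strat A Z) : Prop := ∀ t, IsDR t (β t)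

/-- Value with `n` remaining steps starting at time `t`. -/
noncomputable def ValAux (G : POSG) :
    (n : ℕ) → (t : ℕ) → OccVec G t → Strat G.A1 G.Z1 → Strat G.A2 G.Z2 → ℝ
  | 0, _, _, _, _ => 0
  | n + 1, t, o, β1, β2 =>
      Rew G t o (β1 t) (β2 t) + G.γ * ValAux G n (t + 1) (Tr G t o (β1 t) (β2 t)) β1 β2

/-- The value `V_τ(o_τ, β_{τ:H−1})` (with `V_H = 0`). -/
noncomputable def Val (G : POSG) (t : ℕ) (o : OccVec G t)
    (β1 : Strat G.A1 G.Z1) (β2 : Strat G.A2 G.Z2) : ℝ :=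
  ValAux G (G.H - t) t o β1 β2

/-- The optimal (maximin) value `V*_τ(o_τ)`. -/
noncomputable def Vstar (G : POSG) (t : ℕ) (o : OccVec G t) : ℝ :=
  ⨆ β1 : {β : Strat G.A1 G.Z1 // IsStrat β},
    ⨅ β2 : {β : Strat G.A2 G.Z2 // IsStrat β}, Val G t o β1.1 β2.1

/-- The local game `Q*_τ(o_τ, β¹_τ, β²_τ)`. -/
noncomputable def Qstar (G : POSG) (t : ℕ) (o : OccVec G t)
    (β1 : DRVec G.A1 G.Z1 t) (β2 : DRVec G.A2 G.Z2 t) : ℝ :=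
  Rew G t o β1 β2 + G.γ * Vstar G (t + 1) (Tr G t o β1 β2)

/-!
Kuhn's sequence form: a behavioral strategy on `[τ, H)` is encoded by its realization plan, the
probabilities of its own action sequences. Realization plans form a compact convex polytope, every
plan comes from a behavioral strategy, and the value `V_τ(o, ·, ·)` is bilinear in the two plans.
The minimax theorem therefore gives a saddle point `(b¹, b²)` of `V_τ(o, ·, ·)` in behavioral
strategies, whose value is `V*_τ(o)`. Since `Q*_τ(o, β¹, β²)` is the sup-inf of `V_τ(o, ·, ·)` over
strategies whose rules at time `τ` are `β¹` and `β²`, the rules `b¹_τ` and `b²_τ` bound the local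
game by `V*_τ(o)` from both sides; this yields an equilibrium and pins the value of every one.
-/

section Bilinear

variable {E F : Type*} [NormedAddCommGroup E] [NormedSpace ℝ E] [FiniteDimensional ℝ E]
  [NormedAddCommGroup F] [NormedSpace ℝ F] [FiniteDimensional ℝ F]
  (B : E →ₗ[ℝ] F →ₗ[ℝ] ℝ) {X : Set E} {Y : Set F}

theorem LinearMap.exists_saddlePoint
    (hXne : X.Nonempty) (hXc : Convex ℝ X) (hXk : IsCompact X)
    (hYne : Y.Nonempty) (hYc : Convex ℝ Y) (hYk : IsCompact Y) :
    ∃ x ∈ X, ∃ y ∈ Y, ∀ x' ∈ X, ∀ y' ∈ Y, B x' y ≤ B x y' := by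
  obtain ⟨y, hy, x, hx, h⟩ := Sion.exists_isSaddlePointOn (f := fun y x => B x y)
    hYne hYc hYk
    (fun x _ => (B x).continuous_of_finiteDimensional.lowerSemicontinuous.lowerSemicontinuousOn _)
    (fun x _ => ((B x).convexOn hYc).quasiconvexOn) hXc hXne hXk
    (fun y _ =>
      (B.flip y).continuous_of_finiteDimensional.upperSemicontinuous.upperSemicontinuousOn _)
    (fun y _ => ((B.flip y).concaveOn hXc).quasiconcaveOn)
  exact ⟨x, hx, y, hy, fun x' hx' y' hy' => h y' hy' x' hx'⟩

theorem LinearMap.exists_abs_le_of_isCompact (hXk : IsCompact X) (hYk : IsCompact Y) :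
    ∃ C, ∀ x ∈ X, ∀ y ∈ Y, |B x y| ≤ C := by
  obtain ⟨C, hC⟩ := (hXk.prod hYk).exists_bound_of_continuousOn
    B.toContinuousBilinearMap.continuous₂.continuousOn
  exact ⟨C, fun x hx y hy => hC (x, y) ⟨hx, hy⟩⟩

end Bilinear

section SupInf

variable {ι κ : Type*} {C : ℝ}

theorem bddBelow_range_of_abs_le {f : κ → ℝ} (h : ∀ j, |f j| ≤ C) : BddBelow (Set.range f) :=
  ⟨-C, Set.forall_mem_range.2 fun j => neg_le_of_abs_le (h j)⟩

theorem bddAbove_range_of_abs_le {f : κ → ℝ} (h : ∀ j, |f j| ≤ C) : BddAbove (Set.range f) :=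
  ⟨C, Set.forall_mem_range.2 fun j => le_of_abs_le (h j)⟩

theorem abs_ciInf_le_of_abs_le [Nonempty κ] {f : κ → ℝ} (h : ∀ j, |f j| ≤ C) :
    |⨅ j, f j| ≤ C :=
  abs_le.2 ⟨le_ciInf fun j => neg_le_of_abs_le (h j),
    (ciInf_le (bddBelow_range_of_abs_le h) (Classical.arbitrary κ)).trans (le_of_abs_le (h _))⟩

variable {F : ι → κ → ℝ}

theorem ciSup_ciInf_le_of_forall_le [Nonempty ι] (hF : ∀ i j, |F i j| ≤ C) {w : ℝ} (j₀ : κ)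
    (h : ∀ i, F i j₀ ≤ w) : ⨆ i, ⨅ j, F i j ≤ w :=
  ciSup_le fun i => (ciInf_le (bddBelow_range_of_abs_le (hF i)) j₀).trans (h i)

theorem le_ciSup_ciInf_of_forall_le [Nonempty κ] (hF : ∀ i j, |F i j| ≤ C) {w : ℝ} (i₀ : ι)
    (h : ∀ j, w ≤ F i₀ j) : w ≤ ⨆ i, ⨅ j, F i j :=
  (le_ciInf h).trans
    (le_ciSup (bddAbove_range_of_abs_le fun i => abs_ciInf_le_of_abs_le (hF i)) i₀)

theorem add_mul_ciSup_ciInf [Nonempty ι] [Nonempty κ] (hF : ∀ i j, |F i j| ≤ C) (a : ℝ)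
    {c : ℝ} (hc : 0 ≤ c) : a + c * ⨆ i, ⨅ j, F i j = ⨆ i, ⨅ j, (a + c * F i j) := by
  have hmono : Monotone fun x : ℝ => a + c * x := fun x y hxy => by
    simpa using mul_le_mul_of_nonneg_left hxy hc
  rw [hmono.map_ciSup_of_continuousAt (by fun_prop)
    (bddAbove_range_of_abs_le fun i => abs_ciInf_le_of_abs_le (hF i))]
  exact iSup_congr fun i =>
    hmono.map_ciInf_of_continuousAt (by fun_prop) (bddBelow_range_of_abs_le (hF i))

end SupInf

theorem exists_nash_and_value_eq_of_bounds {α β : Type*} {p : α → Prop} {q : β → Prop}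
    (Q : α → β → ℝ) {w : ℝ} {a₀ : α} {b₀ : β} (ha₀ : p a₀) (hb₀ : q b₀)
    (hle : ∀ a, p a → Q a b₀ ≤ w) (hge : ∀ b, q b → w ≤ Q a₀ b) :
    (∃ a₀ b₀, p a₀ ∧ q b₀ ∧ (∀ a, p a → Q a b₀ ≤ Q a₀ b₀) ∧ ∀ b, q b → Q a₀ b₀ ≤ Q a₀ b) ∧
    ∀ a₀ b₀, p a₀ → q b₀ → (∀ a, p a → Q a b₀ ≤ Q a₀ b₀) → (∀ b, q b → Q a₀ b₀ ≤ Q a₀ b) →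
      Q a₀ b₀ = w := by
  have hval : Q a₀ b₀ = w := le_antisymm (hle a₀ ha₀) (hge b₀ hb₀)
  refine ⟨⟨a₀, b₀, ha₀, hb₀, fun a ha => hval ▸ hle a ha, fun b hb => hval ▸ hge b hb⟩,
    fun a b ha hb hnash₁ hnash₂ => le_antisymm ?_ ?_⟩
  · exact (hnash₂ b₀ hb₀).trans (hle a ha)
  · exact (hge b hb).trans (hnash₁ a₀ ha₀)

theorem IsDR.le_one {A Z : Type} [Fintype A] {t : ℕ} {β : DRVec A Z t} (hβ : IsDR t β)
    (θ : Hist A Z t) (a : A) : β θ a ≤ 1 :=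
  (hβ.2 θ).le.trans' (Finset.single_le_sum (fun a _ => hβ.1 θ a) (Finset.mem_univ a))

section RealizationPlan

variable {A Z : Type} {τ n : ℕ}

noncomputable def uniformStrat (A Z : Type) [Fintype A] : Strat A Z :=
  fun _ _ _ => (Fintype.card A : ℝ)⁻¹

theorem isStrat_uniformStrat [Fintype A] [Nonempty A] : IsStrat (uniformStrat A Z) :=
  fun _ => ⟨fun _ _ => inv_nonneg.2 (Nat.cast_nonneg _), fun _ => by simp [uniformStrat]⟩

instance [Fintype A] [Nonempty A] : Nonempty {b : Strat A Z // IsStrat b} :=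
  ⟨⟨_, isStrat_uniformStrat⟩⟩

theorem isStrat_update [Fintype A] {b : Strat A Z} (hb : IsStrat b) {t : ℕ} {β : DRVec A Z t}
    (hβ : IsDR t β) : IsStrat (Function.update b t β) := by
  intro u
  rcases eq_or_ne u t with rfl | h
  · rwa [Function.update_self]
  · rw [Function.update_of_ne h]
    exact hb u

noncomputable def reach (τ : ℕ) (b : Strat A Z) : (k : ℕ) → Hist A Z (τ + k) → ℝ
  | 0, _ => 1
  | k + 1, θ => reach τ b k (Fin.init θ) * b (τ + k) (Fin.init θ) (θ (Fin.last (τ + k))).1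

theorem reach_snoc (b : Strat A Z) (k : ℕ) (θ : Hist A Z (τ + k)) (a : A) (z : Z) :
    reach τ b (k + 1) (Fin.snoc θ (a, z)) = reach τ b k θ * b (τ + k) θ a := by
  simp [reach, Fin.init_snoc, Fin.snoc_last]

theorem reach_mem_Icc [Fintype A] {b : Strat A Z} (hb : IsStrat b) :
    ∀ (k : ℕ) (θ : Hist A Z (τ + k)), reach τ b k θ ∈ Set.Icc (0 : ℝ) 1
  | 0, _ => ⟨zero_le_one, le_rfl⟩
  | k + 1, _ => unitInterval.mul_mem (reach_mem_Icc hb k _)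
      ⟨(hb _).1 _ _, (hb _).le_one _ _⟩

abbrev PlanIdx (A Z : Type) (τ n : ℕ) : Type := (k : Fin (n + 1)) × Hist A Z (τ + k)

noncomputable def plan (τ n : ℕ) (b : Strat A Z) : PlanIdx A Z τ n → ℝ :=
  fun i => reach τ b i.1 i.2

/-- Realization plans (the sequence form of behavioral strategies on `[τ, τ + n)`): `x ⟨k, θ⟩`
is the probability of the player's own actions in the last `k` entries of `θ`. The bound `x ≤ 1`
follows from the other conditions; it is listed to make compactness immediate. -/
def planSet (A Z : Type) [Fintype A] (τ n : ℕ) : Set (PlanIdx A Z τ n → ℝ) :=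
  {x | (∀ θ : Hist A Z (τ + 0), x ⟨0, θ⟩ = 1) ∧ (∀ i, 0 ≤ x i) ∧ (∀ i, x i ≤ 1) ∧
    (∀ k (hk : k < n) (θ : Hist A Z (τ + k)) (a : A) (z z' : Z),
      x ⟨⟨k + 1, by omega⟩, Fin.snoc θ (a, z)⟩ = x ⟨⟨k + 1, by omega⟩, Fin.snoc θ (a, z')⟩) ∧
    (∀ k (hk : k < n) (θ : Hist A Z (τ + k)) (z : Z),
      ∑ a, x ⟨⟨k + 1, by omega⟩, Fin.snoc θ (a, z)⟩ = x ⟨⟨k, by omega⟩, θ⟩)}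

theorem plan_mem_planSet [Fintype A] {b : Strat A Z} (hb : IsStrat b) :
    plan τ n b ∈ planSet A Z τ n := by
  refine ⟨fun _ => rfl, fun i => (reach_mem_Icc hb _ _).1, fun i => (reach_mem_Icc hb _ _).2,
    fun k hk θ a z z' => ?_, fun k hk θ z => ?_⟩
  · simp only [plan, reach_snoc]
  · simp only [plan, reach_snoc, ← Finset.mul_sum, (hb _).2, mul_one]

variable [Fintype A]

theorem convex_planSet : Convex ℝ (planSet A Z τ n) := by
  rintro x ⟨hx₀, hx₁, hx₂, hx₃, hx₄⟩ y ⟨hy₀, hy₁, hy₂, hy₃, hy₄⟩ p q hp hq hpq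
  refine ⟨fun θ => ?_, fun i => ?_, fun i => ?_, fun k hk θ a z z' => ?_, fun k hk θ z => ?_⟩ <;>
    simp only [Pi.add_apply, Pi.smul_apply, smul_eq_mul]
  · rw [hx₀, hy₀, mul_one, mul_one, hpq]
  · have := hx₁ i; have := hy₁ i; positivity
  · nlinarith [hx₂ i, hy₂ i]
  · rw [hx₃ k hk θ a z z', hy₃ k hk θ a z z']
  · rw [Finset.sum_add_distrib, ← Finset.mul_sum, ← Finset.mul_sum, hx₄ k hk θ z, hy₄ k hk θ z]

theorem isCompact_planSet : IsCompact (planSet A Z τ n) := by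
  refine (isCompact_univ_pi fun _ => isCompact_Icc (a := (0 : ℝ)) (b := 1)).of_isClosed_subset
    ?_ fun x hx => Set.mem_univ_pi.2 fun i => ⟨hx.2.1 i, hx.2.2.1 i⟩
  simp only [planSet, Set.ofPred_and, Set.ofPred_forall]
  repeat' first | apply IsClosed.inter | apply isClosed_iInter; intro
  all_goals first
    | exact isClosed_eq (by fun_prop) (by fun_prop)
    | exact isClosed_le (by fun_prop) (by fun_prop)

theorem planSet_nonempty [Nonempty A] : (planSet A Z τ n).Nonempty :=
  ⟨_, plan_mem_planSet isStrat_uniformStrat⟩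

variable [Nonempty Z]

noncomputable def planRule (x : PlanIdx A Z τ n → ℝ) (k : ℕ) (hk : k < n) :
    DRVec A Z (τ + k) := fun θ a =>
  if x ⟨⟨k, by omega⟩, θ⟩ = 0 then (Fintype.card A : ℝ)⁻¹
  else x ⟨⟨k + 1, by omega⟩, Fin.snoc θ (a, Classical.arbitrary Z)⟩ / x ⟨⟨k, by omega⟩, θ⟩

noncomputable def planStrat (x : PlanIdx A Z τ n → ℝ) : Strat A Z := fun t =>
  if h : τ ≤ t ∧ t < τ + n then fun θ => planRule x (t - τ) (by omega) (θ ∘ Fin.cast (by omega))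
  else uniformStrat A Z t

theorem planStrat_add (x : PlanIdx A Z τ n → ℝ) {k : ℕ} (hk : k < n) :
    planStrat x (τ + k) = planRule x k hk := by
  have cast_eq : ∀ m (hm : m = k) (hm' : m < n),
      (fun θ => planRule x m hm' (θ ∘ Fin.cast (by omega))) = planRule x k hk := by
    rintro m rfl _
    rfl
  rw [planStrat, dif_pos (by omega)]
  exact cast_eq _ (by omega) _

theorem reach_planStrat {x : PlanIdx A Z τ n → ℝ} (hx : x ∈ planSet A Z τ n) :
    ∀ (k : ℕ) (hk : k < n + 1) (θ : Hist A Z (τ + k)), reach τ (planStrat x) k θ = x ⟨⟨k, hk⟩, θ⟩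
  | 0, _, θ => (hx.1 θ).symm
  | k + 1, hk, θ => by
    obtain ⟨θ', ⟨a, z⟩, rfl⟩ : ∃ θ' az, θ = Fin.snoc θ' az := ⟨_, _, (Fin.snoc_init_self θ).symm⟩
    rw [reach_snoc, reach_planStrat hx k (by omega), planStrat_add x (by omega), planRule]
    obtain ⟨-, hnonneg, -, hobs, hsum⟩ := hx
    split_ifs with h
    · -- an unreachable parent forces all its children to vanish
      have hchildren := hsum k (by omega) θ' z
      rw [h] at hchildren
      rw [h, zero_mul, eq_comm]
      exact (Finset.sum_eq_zero_iff_of_nonneg fun _ _ => hnonneg _).1 hchildren a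
        (Finset.mem_univ a)
    · rw [mul_div_cancel₀ _ h, hobs k (by omega) θ' a]

theorem plan_planStrat {x : PlanIdx A Z τ n → ℝ} (hx : x ∈ planSet A Z τ n) :
    plan τ n (planStrat x) = x :=
  funext fun i => reach_planStrat hx i.1 i.1.2 i.2

variable [Nonempty A]

theorem isDR_planRule {x : PlanIdx A Z τ n → ℝ} (hx : x ∈ planSet A Z τ n) (k : ℕ)
    (hk : k < n) : IsDR (τ + k) (planRule x k hk) := by
  obtain ⟨-, hnonneg, -, -, hsum⟩ := hx
  refine ⟨fun θ a => ?_, fun θ => ?_⟩ <;> unfold planRule <;> split_ifs with h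
  · exact inv_nonneg.2 (Nat.cast_nonneg _)
  · exact div_nonneg (hnonneg _) (hnonneg _)
  · simp [Fintype.card_ne_zero]
  · rw [← Finset.sum_div, hsum k hk θ, div_self h]

theorem isStrat_planStrat {x : PlanIdx A Z τ n → ℝ} (hx : x ∈ planSet A Z τ n) :
    IsStrat (planStrat x) := by
  intro t
  by_cases h : τ ≤ t ∧ t < τ + n
  · obtain ⟨k, rfl⟩ := Nat.exists_eq_add_of_le h.1
    rw [planStrat_add x (by omega)]
    exact isDR_planRule hx k _
  · rw [planStrat, dif_neg h]
    exact isStrat_uniformStrat t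

end RealizationPlan

section SequenceForm

variable (G : POSG)

/-- The occupancy `k` steps after `τ` produced by chance alone, as if both players played the
recorded actions with probability one. -/
noncomputable def chanceOcc (τ : ℕ) (o : OccVec G τ) : (k : ℕ) → OccVec G (τ + k)
  | 0 => o
  | k + 1 => Tr G (τ + k) (chanceOcc τ o k) (fun _ _ => 1) (fun _ _ => 1)

noncomputable def playOcc (τ : ℕ) (o : OccVec G τ) (b1 : Strat G.A1 G.Z1)
    (b2 : Strat G.A2 G.Z2) : (k : ℕ) → OccVec G (τ + k)
  | 0 => o
  | k + 1 => Tr G (τ + k) (playOcc τ o b1 b2 k) (b1 (τ + k)) (b2 (τ + k))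

variable {G} {τ : ℕ} (o : OccVec G τ) (b1 : Strat G.A1 G.Z1) (b2 : Strat G.A2 G.Z2)

theorem playOcc_eq (k : ℕ) (q : G.S × Hist G.A1 G.Z1 (τ + k) × Hist G.A2 G.Z2 (τ + k)) :
    playOcc G τ o b1 b2 k q = reach τ b1 k q.2.1 * reach τ b2 k q.2.2 * chanceOcc G τ o k q := by
  induction k with
  | zero => simp [playOcc, chanceOcc, reach]
  | succ k ih =>
    simp only [playOcc, chanceOcc, Tr, reach, ih, one_mul, Finset.mul_sum]
    exact Finset.sum_congr rfl fun s _ => by ring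

theorem rew_playOcc (k : ℕ) :
    Rew G (τ + k) (playOcc G τ o b1 b2 k) (b1 (τ + k)) (b2 (τ + k)) =
      ∑ q : G.S × Hist G.A1 G.Z1 (τ + k) × Hist G.A2 G.Z2 (τ + k), ∑ a1, ∑ a2,
        reach τ b1 (k + 1) (Fin.snoc q.2.1 (a1, Classical.arbitrary G.Z1)) *
          reach τ b2 (k + 1) (Fin.snoc q.2.2 (a2, Classical.arbitrary G.Z2)) *
          (chanceOcc G τ o k q * G.r q.1 a1 a2) := by
  simp only [Rew, playOcc_eq, reach_snoc]
  exact Finset.sum_congr rfl fun q _ => Finset.sum_congr rfl fun a1 _ =>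
    Finset.sum_congr rfl fun a2 _ => by ring

theorem valAux_playOcc (m k : ℕ) :
    ValAux G m (τ + k) (playOcc G τ o b1 b2 k) b1 b2 =
      ∑ j ∈ Finset.range m, G.γ ^ j *
        Rew G (τ + (k + j)) (playOcc G τ o b1 b2 (k + j)) (b1 (τ + (k + j)))
          (b2 (τ + (k + j))) := by
  induction m generalizing k with
  | zero => rfl
  | succ m ih =>
    rw [Finset.sum_range_succ', ValAux, pow_zero, one_mul, add_comm]
    erw [ih (k + 1)]
    simp only [Finset.mul_sum, pow_succ]
    congr 1
    refine Finset.sum_congr rfl fun j _ => ?_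
    rw [show k + (j + 1) = k + 1 + j by omega]
    ring

variable (G τ) in
noncomputable def seqPayoff (n : ℕ) :
    (PlanIdx G.A1 G.Z1 τ n → ℝ) →ₗ[ℝ] (PlanIdx G.A2 G.Z2 τ n → ℝ) →ₗ[ℝ] ℝ :=
  LinearMap.mk₂ ℝ (fun x y => ∑ k : Fin n, G.γ ^ (k : ℕ) *
      ∑ q : G.S × Hist G.A1 G.Z1 (τ + k) × Hist G.A2 G.Z2 (τ + k), ∑ a1, ∑ a2,
        x ⟨⟨k + 1, by omega⟩, Fin.snoc q.2.1 (a1, Classical.arbitrary G.Z1)⟩ *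
          y ⟨⟨k + 1, by omega⟩, Fin.snoc q.2.2 (a2, Classical.arbitrary G.Z2)⟩ *
          (chanceOcc G τ o k q * G.r q.1 a1 a2))
    (fun _ _ _ => by simp only [Pi.add_apply, add_mul, mul_add, Finset.sum_add_distrib])
    (fun _ _ _ => by
      simp only [Pi.smul_apply, smul_eq_mul, Finset.mul_sum]
      congr! 4
      ring)
    (fun _ _ _ => by simp only [Pi.add_apply, add_mul, mul_add, Finset.sum_add_distrib])
    (fun _ _ _ => by
      simp only [Pi.smul_apply, smul_eq_mul, Finset.mul_sum]
      congr! 4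
      ring)

theorem valAux_eq_seqPayoff (n : ℕ) :
    ValAux G n τ o b1 b2 = seqPayoff G τ o n (plan τ n b1) (plan τ n b2) := by
  change ValAux G n (τ + 0) (playOcc G τ o b1 b2 0) b1 b2 = _
  rw [valAux_playOcc, ← Fin.sum_univ_eq_sum_range]
  refine Finset.sum_congr rfl fun k _ => ?_
  rw [zero_add, rew_playOcc]
  rfl

end SequenceForm

section LocalGame

structure IsStratSaddle (G : POSG) (τ : ℕ) (o : OccVec G τ) (b1s : Strat G.A1 G.Z1)
    (b2s : Strat G.A2 G.Z2) : Prop where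
  isStrat₁ : IsStrat b1s
  isStrat₂ : IsStrat b2s
  val_le : ∀ b1 b2, IsStrat b1 → IsStrat b2 → Val G τ o b1 b2s ≤ Val G τ o b1s b2

variable (G : POSG) {τ : ℕ} (o : OccVec G τ)

theorem exists_abs_val_le : ∃ C, ∀ b1 b2, IsStrat b1 → IsStrat b2 → |Val G τ o b1 b2| ≤ C := by
  obtain ⟨C, hC⟩ :=
    (seqPayoff G τ o (G.H - τ)).exists_abs_le_of_isCompact isCompact_planSet isCompact_planSet
  refine ⟨C, fun b1 b2 hb1 hb2 => ?_⟩
  rw [Val, valAux_eq_seqPayoff]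
  exact hC _ (plan_mem_planSet hb1) _ (plan_mem_planSet hb2)

theorem valAux_update_of_lt {t₀ t : ℕ} (ht : t₀ < t) (m : ℕ) (o' : OccVec G t)
    (b1 : Strat G.A1 G.Z1) (b2 : Strat G.A2 G.Z2) (β1 : DRVec G.A1 G.Z1 t₀)
    (β2 : DRVec G.A2 G.Z2 t₀) :
    ValAux G m t o' (Function.update b1 t₀ β1) (Function.update b2 t₀ β2) =
      ValAux G m t o' b1 b2 := by
  induction m generalizing t with
  | zero => rfl
  | succ m ih =>
    simp only [ValAux, Function.update_of_ne ht.ne', ih (Nat.lt_succ_of_lt ht)]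

theorem qstar_eq_ciSup_ciInf (hτ : τ < G.H) (β1 : DRVec G.A1 G.Z1 τ)
    (β2 : DRVec G.A2 G.Z2 τ) :
    Qstar G τ o β1 β2 = ⨆ b1 : {b : Strat G.A1 G.Z1 // IsStrat b},
      ⨅ b2 : {b : Strat G.A2 G.Z2 // IsStrat b},
        Val G τ o (Function.update b1.1 τ β1) (Function.update b2.1 τ β2) := by
  obtain ⟨C, hC⟩ := exists_abs_val_le G (Tr G τ o β1 β2)
  rw [Qstar, Vstar, add_mul_ciSup_ciInf (fun b1 b2 => hC _ _ b1.2 b2.2) _ G.γ_nonneg]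
  refine iSup_congr fun b1 => iInf_congr fun b2 => ?_
  obtain ⟨m, hm⟩ : ∃ m, G.H - τ = m + 1 := ⟨G.H - (τ + 1), by omega⟩
  rw [Val, Val, hm, show G.H - (τ + 1) = m by omega, ValAux, Function.update_self,
    Function.update_self, valAux_update_of_lt G (Nat.lt_succ_self τ)]

theorem exists_isStratSaddle : ∃ b1s b2s, IsStratSaddle G τ o b1s b2s := by
  obtain ⟨x, hx, y, hy, hxy⟩ := (seqPayoff G τ o (G.H - τ)).exists_saddlePoint
    planSet_nonempty convex_planSet isCompact_planSet
    planSet_nonempty convex_planSet isCompact_planSet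
  refine ⟨planStrat x, planStrat y, isStrat_planStrat hx, isStrat_planStrat hy,
    fun b1 b2 hb1 hb2 => ?_⟩
  simpa only [Val, valAux_eq_seqPayoff, plan_planStrat hx, plan_planStrat hy] using
    hxy _ (plan_mem_planSet hb1) _ (plan_mem_planSet hb2)

namespace IsStratSaddle

variable {G o} {b1s : Strat G.A1 G.Z1} {b2s : Strat G.A2 G.Z2}

theorem vstar_eq (h : IsStratSaddle G τ o b1s b2s) : Vstar G τ o = Val G τ o b1s b2s := by
  obtain ⟨C, hC⟩ := exists_abs_val_le G o
  have hC' : ∀ (b1 : {b // IsStrat b}) (b2 : {b // IsStrat b}), |Val G τ o b1.1 b2.1| ≤ C :=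
    fun b1 b2 => hC _ _ b1.2 b2.2
  exact le_antisymm
    (ciSup_ciInf_le_of_forall_le hC' ⟨b2s, h.isStrat₂⟩ fun b1 => h.val_le _ _ b1.2 h.isStrat₂)
    (le_ciSup_ciInf_of_forall_le hC' ⟨b1s, h.isStrat₁⟩ fun b2 => h.val_le _ _ h.isStrat₁ b2.2)

theorem qstar_le (h : IsStratSaddle G τ o b1s b2s) (hτ : τ < G.H) {β1 : DRVec G.A1 G.Z1 τ}
    (hβ1 : IsDR τ β1) :
    Qstar G τ o β1 (b2s τ) ≤ Val G τ o b1s b2s := by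
  obtain ⟨C, hC⟩ := exists_abs_val_le G o
  rw [qstar_eq_ciSup_ciInf G o hτ]
  refine ciSup_ciInf_le_of_forall_le
    (fun b1 b2 => hC _ _ (isStrat_update b1.2 hβ1) (isStrat_update b2.2 (h.isStrat₂ τ)))
    ⟨b2s, h.isStrat₂⟩ fun b1 => ?_
  rw [Function.update_eq_self]
  exact h.val_le _ _ (isStrat_update b1.2 hβ1) h.isStrat₂

theorem le_qstar (h : IsStratSaddle G τ o b1s b2s) (hτ : τ < G.H) {β2 : DRVec G.A2 G.Z2 τ}
    (hβ2 : IsDR τ β2) :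
    Val G τ o b1s b2s ≤ Qstar G τ o (b1s τ) β2 := by
  obtain ⟨C, hC⟩ := exists_abs_val_le G o
  rw [qstar_eq_ciSup_ciInf G o hτ]
  refine le_ciSup_ciInf_of_forall_le
    (fun b1 b2 => hC _ _ (isStrat_update b1.2 (h.isStrat₁ τ)) (isStrat_update b2.2 hβ2))
    ⟨b1s, h.isStrat₁⟩ fun b2 => ?_
  rw [Function.update_eq_self]
  exact h.val_le _ _ h.isStrat₁ (isStrat_update b2.2 hβ2)

end IsStratSaddle

end LocalGame

theorem local_game_nash_equilibrium_general (G : POSG) (τ : ℕ) (hτ : τ < G.H)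
    (o : OccVec G τ) :
    (∃ β1s : DRVec G.A1 G.Z1 τ, ∃ β2s : DRVec G.A2 G.Z2 τ,
      IsDR τ β1s ∧ IsDR τ β2s ∧
      (∀ β1 : DRVec G.A1 G.Z1 τ, IsDR τ β1 →
          Qstar G τ o β1 β2s ≤ Qstar G τ o β1s β2s) ∧
      (∀ β2 : DRVec G.A2 G.Z2 τ, IsDR τ β2 →
          Qstar G τ o β1s β2s ≤ Qstar G τ o β1s β2)) ∧
    (∀ β1s : DRVec G.A1 G.Z1 τ, ∀ β2s : DRVec G.A2 G.Z2 τ,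
      IsDR τ β1s → IsDR τ β2s →
      (∀ β1 : DRVec G.A1 G.Z1 τ, IsDR τ β1 →
          Qstar G τ o β1 β2s ≤ Qstar G τ o β1s β2s) →
      (∀ β2 : DRVec G.A2 G.Z2 τ, IsDR τ β2 →
          Qstar G τ o β1s β2s ≤ Qstar G τ o β1s β2) →
      Qstar G τ o β1s β2s = Vstar G τ o) := by
  obtain ⟨b1s, b2s, h⟩ := exists_isStratSaddle G o
  rw [h.vstar_eq]
  exact exists_nash_and_value_eq_of_bounds (Qstar G τ o) (h.isStrat₁ τ) (h.isStrat₂ τ)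
    (fun _ => h.qstar_le hτ) (fun _ => h.le_qstar hτ)

/-- the local game `Q*_τ(o_τ, ·, ·)` admits at least one Nash equilibrium,
and every such equilibrium has value `V*_τ(o_τ)`. -/
theorem local_game_nash_equilibrium (G : POSG) (τ : ℕ) (hτ : τ < G.H)
    (o : OccVec G τ) (ho : IsOcc G τ o) :
    (∃ β1s : DRVec G.A1 G.Z1 τ, ∃ β2s : DRVec G.A2 G.Z2 τ,
      IsDR τ β1s ∧ IsDR τ β2s ∧
      (∀ β1 : DRVec G.A1 G.Z1 τ, IsDR τ β1 →
          Qstar G τ o β1 β2s ≤ Qstar G τ o β1s β2s) ∧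
      (∀ β2 : DRVec G.A2 G.Z2 τ, IsDR τ β2 →
          Qstar G τ o β1s β2s ≤ Qstar G τ o β1s β2)) ∧
    (∀ β1s : DRVec G.A1 G.Z1 τ, ∀ β2s : DRVec G.A2 G.Z2 τ,
      IsDR τ β1s → IsDR τ β2s →
      (∀ β1 : DRVec G.A1 G.Z1 τ, IsDR τ β1 →
          Qstar G τ o β1 β2s ≤ Qstar G τ o β1s β2s) →
      (∀ β2 : DRVec G.A2 G.Z2 τ, IsDR τ β2 →
          Qstar G τ o β1s β2s ≤ Qstar G τ o β1s β2) →
      Qstar G τ o β1s β2s = Vstar G τ o) :=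
  local_game_nash_equilibrium_general G τ hτ o
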